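/- Let G = (V,E) be a connected loopless multigraph with edge weights w : E → ℝ, let T^OPT be a minimum spanning tree of G with respect to w, and let e ∈ E. Define e* := e if e lies in some minimum spanning tree of G, and otherwise let e* be a maximum-weight edge other than e on the unique cycle in T^OPT ∪ {e}. Then the minimum weight of a spanning tree of the contraction G/e equals the minimum weight of a spanning tree of G minus w(e*). -/

import Mathlib

open scoped Classical

/-- A loopless multigraph on vertex type `V` with edge type `E`:
each edge has two distinct endpoints, parallel edges are allowed. -/
structure Multigraph (V : Type*) (E : Type*) where
  ends : E → Sym2 V
  loopless : ∀ e, ¬ (ends e).IsDiag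

namespace Multigraph

variable {V E : Type*} (G : Multigraph V E)

/-- `u` and `v` are joined by a walk using only edges in `F`. -/
def Reach (F : Set E) (u v : V) : Prop :=
  Relation.ReflTransGen (fun x y => ∃ e ∈ F, G.ends e = s(x, y)) u v

/-- The subgraph with edge set `F` (and all vertices) is connected. -/
def ConnectedOn (F : Set E) : Prop := ∀ u v : V, G.Reach F u v

/-- The multigraph is connected. -/
def Connected : Prop := G.ConnectedOn Set.univ

/-- A cut set of a connected multigraph: removing its edges disconnects the graph. -/
def CutSet (C : Set E) : Prop := ¬ G.ConnectedOn Cᶜ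

/-- A bond: an inclusion-wise minimal cut set. -/
def IsBond (C : Set E) : Prop := G.CutSet C ∧ ∀ C' ⊂ C, ¬ G.CutSet C'

/-- The maximum size of a bond, `|B(G)|`. -/
noncomputable def maxBondSize : ℕ := sSup {n | ∃ C : Set E, G.IsBond C ∧ C.ncard = n}

/-- A set of edges is acyclic (contains no cycle) iff no edge of it joins
two vertices that are already connected by the remaining edges. -/
def Acyclic (F : Set E) : Prop :=
  ∀ e ∈ F, ∀ u v : V, G.ends e = s(u, v) → ¬ G.Reach (F \ {e}) u v

/-- A spanning tree: a set of `|V| - 1` edges containing no cycle. -/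
def IsSpanningTree (T : Set E) : Prop :=
  T.ncard = Nat.card V - 1 ∧ G.Acyclic T

/-- The total weight of an edge set. -/
noncomputable def weight (w : E → ℝ) (T : Set E) : ℝ := ∑ᶠ e ∈ T, w e

/-- A minimum spanning tree with respect to edge weights `w`. -/
def IsMST (w : E → ℝ) (T : Set E) : Prop :=
  G.IsSpanningTree T ∧ ∀ T', G.IsSpanningTree T' → weight w T ≤ weight w T'

/-- `f` lies on the (unique) `u`-`v` path in the tree `T`: it belongs to `T` and
removing it from `T` disconnects `u` from `v`. -/
def OnPath (T : Set E) (u v : V) (f : E) : Prop :=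
  f ∈ T ∧ ¬ G.Reach (T \ {f}) u v

/-- The vertex identification produced by contracting the edge `e`. -/
def contractSetoid (e : E) : Setoid V where
  r x y := x = y ∨ G.ends e = s(x, y)
  iseqv := by
    refine ⟨fun x => Or.inl rfl, ?_, ?_⟩
    · rintro x y (rfl | h)
      · exact Or.inl rfl
      · right; rwa [Sym2.eq_swap]
    · rintro x y z (rfl | hxy) (rfl | hyz)
      · exact Or.inl rfl
      · exact Or.inr hyz
      · exact Or.inr hxy
      · rw [hxy] at hyz
        rw [Sym2.eq_iff] at hyz
        rcases hyz with ⟨rfl, rfl⟩ | ⟨rfl, -⟩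
        · exact Or.inl rfl
        · exact Or.inl rfl

/-- The contraction `G/e`: the endpoints of `e` are merged into a single vertex,
`e` is removed, and all resulting loops (the edges parallel to `e`) are deleted. -/
def contract (e : E) :
    Multigraph (Quotient (G.contractSetoid e)) {f : E // f ≠ e ∧ G.ends f ≠ G.ends e} where
  ends f := (G.ends f.1).map (Quotient.mk (G.contractSetoid e))
  loopless := by
    rintro ⟨f, hfe, hff⟩ h
    obtain ⟨x, y, hf⟩ : ∃ x y, G.ends f = s(x, y) := by
      induction G.ends f using Sym2.inductionOn with
      | hf x y => exact ⟨x, y, rfl⟩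
    simp only [hf, Sym2.map_pair_eq] at h
    rcases Quotient.eq''.mp (h : _ = _) with (rfl | hxy)
    · exact G.loopless f (by rw [hf]; exact rfl)
    · exact hff (by rw [hf, hxy])

end Multigraph

namespace Multigraph

section Aux

variable {V E : Type*} {G : Multigraph V E}

lemma ends_pair (G : Multigraph V E) (f : E) : ∃ a b : V, a ≠ b ∧ G.ends f = s(a, b) := by
  obtain ⟨a, b, hf⟩ : ∃ a b, G.ends f = s(a, b) := by
    induction G.ends f using Sym2.inductionOn with
    | hf x y => exact ⟨x, y, rfl⟩
  refine ⟨a, b, fun h => G.loopless f ?_, hf⟩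
  rw [hf, h]; exact Sym2.mk_isDiag_iff.mpr rfl

lemma reach_mono {F F' : Set E} (h : F ⊆ F') {u v : V} (hr : G.Reach F u v) :
    G.Reach F' u v :=
  Relation.ReflTransGen.mono (fun _ _ ⟨e, he, hx⟩ => ⟨e, h he, hx⟩) _ _ hr

lemma reach_symm {F : Set E} {u v : V} (h : G.Reach F u v) : G.Reach F v u :=
  by
    haveI : Std.Symm (fun x y : V => ∃ e ∈ F, G.ends e = s(x, y)) :=
      ⟨fun _ _ ⟨e, he, hx⟩ => ⟨e, he, by rwa [Sym2.eq_swap]⟩⟩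
    exact Std.Symm.symm (r := Relation.ReflTransGen _) _ _ h

lemma reach_step {F : Set E} {f : E} (hf : f ∈ F) {x y : V} (h : G.ends f = s(x, y)) :
    G.Reach F x y :=
  Relation.ReflTransGen.single ⟨f, hf, h⟩

lemma Reach.trans' {F : Set E} {x y z : V} (h : G.Reach F x y) (h' : G.Reach F y z) :
    G.Reach F x z := Relation.ReflTransGen.trans h h'

lemma reach_empty {u v : V} (h : G.Reach (∅ : Set E) u v) : u = v := by
  induction h with
  | refl => rfl
  | tail _ hstep ih => obtain ⟨g, hg, -⟩ := hstep; exact absurd hg (Set.notMem_empty g)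

/-- The setoid of connectivity classes of the subgraph with edge set `F`. -/
def reachSetoid (G : Multigraph V E) (F : Set E) : Setoid V where
  r := G.Reach F
  iseqv := ⟨fun _ => Relation.ReflTransGen.refl, reach_symm, Reach.trans'⟩

/-- Number of connected components of the subgraph with edge set `F`. -/
noncomputable def comp (G : Multigraph V E) (F : Set E) : ℕ :=
  Nat.card (Quotient (G.reachSetoid F))

/-- Walk decomposition for adding one edge. -/
lemma reach_insert_cases {F : Set E} {f : E} {a b : V} (hf : G.ends f = s(a, b))
    {x y : V} (h : G.Reach (insert f F) x y) :
    G.Reach F x y ∨ ((G.Reach F x a ∨ G.Reach F x b) ∧ (G.Reach F a y ∨ G.Reach F b y)) := by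
  induction h with
  | refl => exact Or.inl Relation.ReflTransGen.refl
  | @tail c d hxc hstep ih =>
    obtain ⟨g, hg, hends⟩ := hstep
    rcases Set.mem_insert_iff.mp hg with rfl | hgF
    · have hcd : (c = a ∧ d = b) ∨ (c = b ∧ d = a) := Sym2.eq_iff.mp (hends.symm.trans hf)
      rcases ih with hxcF | ⟨hx, _⟩
      · rcases hcd with ⟨rfl, rfl⟩ | ⟨rfl, rfl⟩
        · exact Or.inr ⟨Or.inl hxcF, Or.inr Relation.ReflTransGen.refl⟩
        · exact Or.inr ⟨Or.inr hxcF, Or.inl Relation.ReflTransGen.refl⟩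
      · rcases hcd with ⟨rfl, rfl⟩ | ⟨rfl, rfl⟩
        · exact Or.inr ⟨hx, Or.inr Relation.ReflTransGen.refl⟩
        · exact Or.inr ⟨hx, Or.inl Relation.ReflTransGen.refl⟩
    · have hstep' : G.Reach F c d := reach_step hgF hends
      rcases ih with hxcF | ⟨hx, hc⟩
      · exact Or.inl (hxcF.trans' hstep')
      · exact Or.inr ⟨hx, Or.imp (fun h => h.trans' hstep') (fun h => h.trans' hstep') hc⟩

/-- Cardinality bookkeeping for a surjection merging at most one pair. -/
lemma card_step {α β : Type*} [Finite α] {f : α → β} (hs : Function.Surjective f)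
    (A B : α) (h : ∀ a b, f a = f b → a = b ∨ (a = A ∧ b = B) ∨ (a = B ∧ b = A)) :
    Nat.card α ≤ Nat.card β + 1 ∧
      (A ≠ B → f A = f B → Nat.card α = Nat.card β + 1) := by
  have : Finite β := Finite.of_surjective f hs
  have := Fintype.ofFinite β
  have hle : Nat.card α ≤ Nat.card β + 1 := by
    rw [← Finite.card_option]
    refine Nat.card_le_card_of_injective
      (fun a => if a = B then none else some (f a)) ?_
    intro a a' haa'
    by_cases ha : a = B <;> by_cases ha' : a' = B <;>
      simp only [ha, ha', if_pos, if_neg, ite_true, ite_false] at haa'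
    · exact ha.trans ha'.symm
    · exact absurd haa' (by simp)
    · exact absurd haa' (by simp)
    · rcases h a a' (by simpa using haa') with h1 | ⟨rfl, rfl⟩ | ⟨h1, h2⟩
      · exact h1
      · exact absurd rfl ha'
      · exact absurd h1 ha
  refine ⟨hle, fun hAB hfAB => le_antisymm hle ?_⟩
  by_contra hlt
  push_neg at hlt
  have hbij := hs.bijective_of_nat_card_le (Nat.lt_succ_iff.mp hlt)
  exact hAB (hbij.injective hfAB)

lemma comp_empty : G.comp (∅ : Set E) = Nat.card V :=
  (Nat.card_eq_of_bijective (Quotient.mk (G.reachSetoid ∅))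
    ⟨fun _ _ h => reach_empty (Quotient.exact h), fun q => q.exists_rep⟩).symm

lemma comp_insert [Finite V] (F : Set E) (f : E) {a b : V} (hf : G.ends f = s(a, b)) :
    G.comp F ≤ G.comp (insert f F) + 1 ∧
      (¬ G.Reach F a b → G.comp F = G.comp (insert f F) + 1) := by
  let π : Quotient (G.reachSetoid F) → Quotient (G.reachSetoid (insert f F)) :=
    Quotient.lift (fun x => Quotient.mk (G.reachSetoid (insert f F)) x)
      (fun x y h => Quotient.sound (reach_mono (Set.subset_insert f F) h))
  have hsurj : Function.Surjective π := by
    intro q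
    obtain ⟨x, rfl⟩ := q.exists_rep
    exact ⟨Quotient.mk _ x, rfl⟩
  have hkey : ∀ c d, π c = π d → c = d ∨
      (c = Quotient.mk (G.reachSetoid F) a ∧ d = Quotient.mk (G.reachSetoid F) b) ∨
      (c = Quotient.mk (G.reachSetoid F) b ∧ d = Quotient.mk (G.reachSetoid F) a) := by
    intro c d hcd
    obtain ⟨x, rfl⟩ := c.exists_rep
    obtain ⟨y, rfl⟩ := d.exists_rep
    have h2 : G.Reach (insert f F) x y := Quotient.exact hcd
    rcases reach_insert_cases hf h2 with h3 | ⟨hx, hy⟩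
    · exact Or.inl (Quotient.sound h3)
    · rcases hx with hx | hx <;> rcases hy with hy | hy
      · exact Or.inl (Quotient.sound (hx.trans' hy))
      · exact Or.inr (Or.inl ⟨Quotient.sound hx, Quotient.sound (reach_symm hy)⟩)
      · exact Or.inr (Or.inr ⟨Quotient.sound hx, Quotient.sound (reach_symm hy)⟩)
      · exact Or.inl (Quotient.sound (hx.trans' hy))
  obtain ⟨hle, heq⟩ := card_step hsurj _ _ hkey
  refine ⟨hle, fun hnr => heq (fun hab => hnr (Quotient.exact hab)) ?_⟩
  exact Quotient.sound (reach_step (Set.mem_insert f F) hf)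

lemma Acyclic.mono {F F' : Set E} (hF : G.Acyclic F) (h : F' ⊆ F) : G.Acyclic F' :=
  fun g hg x y hxy hr =>
    hF g (h hg) x y hxy (reach_mono (Set.diff_subset_diff_left h) hr)

lemma card_le_comp_add_ncard [Finite V] [Finite E] (F : Set E) :
    Nat.card V ≤ G.comp F + F.ncard := by
  have key : ∀ (n : ℕ) (F : Set E), F.ncard = n → Nat.card V ≤ G.comp F + F.ncard := by
    intro n
    induction n with
    | zero =>
      intro F hF
      have hFe : F = ∅ := by rwa [Set.ncard_eq_zero (Set.toFinite F)] at hF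
      rw [hFe, comp_empty, Set.ncard_empty]; omega
    | succ n ih =>
      intro F hF
      obtain ⟨f, hfF⟩ : F.Nonempty := Set.nonempty_of_ncard_ne_zero (by omega)
      have hins : insert f (F \ {f}) = F := by
        rw [Set.insert_diff_singleton, Set.insert_eq_of_mem hfF]
      obtain ⟨a, b, -, hab⟩ := G.ends_pair f
      have h1 := (comp_insert (G:=G) (F \ {f}) f hab).1
      rw [hins] at h1
      have hc : (F \ {f}).ncard + 1 = F.ncard := Set.ncard_diff_singleton_add_one hfF
      have h2 := ih (F \ {f}) (by omega)
      omega
  exact key F.ncard F rfl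

lemma comp_add_ncard_eq [Finite V] [Finite E] {F : Set E} (hF : G.Acyclic F) :
    G.comp F + F.ncard = Nat.card V := by
  have key : ∀ (n : ℕ) (F : Set E), F.ncard = n → G.Acyclic F →
      G.comp F + F.ncard = Nat.card V := by
    intro n
    induction n with
    | zero =>
      intro F hF _
      have hFe : F = ∅ := by rwa [Set.ncard_eq_zero (Set.toFinite F)] at hF
      rw [hFe, comp_empty, Set.ncard_empty]; omega
    | succ n ih =>
      intro F hF hacy
      obtain ⟨f, hfF⟩ : F.Nonempty := Set.nonempty_of_ncard_ne_zero (by omega)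
      have hins : insert f (F \ {f}) = F := by
        rw [Set.insert_diff_singleton, Set.insert_eq_of_mem hfF]
      obtain ⟨a, b, -, hab⟩ := G.ends_pair f
      have hnr : ¬ G.Reach (F \ {f}) a b := hacy f hfF a b hab
      have h1 := (comp_insert (G:=G) (F \ {f}) f hab).2 hnr
      rw [hins] at h1
      have hc : (F \ {f}).ncard + 1 = F.ncard := Set.ncard_diff_singleton_add_one hfF
      have h2 := ih (F \ {f}) (by omega) (hacy.mono Set.diff_subset)
      omega
  exact key F.ncard F rfl hF

lemma connectedOn_iff_comp_le_one [Finite V] {F : Set E} :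
    G.ConnectedOn F ↔ G.comp F ≤ 1 := by
  constructor
  · intro h
    have : Subsingleton (Quotient (G.reachSetoid F)) := ⟨fun c d => by
      obtain ⟨x, rfl⟩ := c.exists_rep
      obtain ⟨y, rfl⟩ := d.exists_rep
      exact Quotient.sound (h x y)⟩
    show Nat.card (Quotient (G.reachSetoid F)) ≤ 1
    exact Finite.card_le_one_iff_subsingleton.mpr this
  · intro h u v
    have h' : Nat.card (Quotient (G.reachSetoid F)) ≤ 1 := h
    have hs : Subsingleton (Quotient (G.reachSetoid F)) :=
      (@Finite.card_le_one_iff_subsingleton (Quotient (G.reachSetoid F)) _).mp h'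
    exact Quotient.exact
      (Subsingleton.elim (Quotient.mk (G.reachSetoid F) u) (Quotient.mk (G.reachSetoid F) v))

lemma reach_subst {F₀ F₂ : Set E} {g : E} {a b : V} (hg : G.ends g = s(a, b))
    (hab : G.Reach F₂ a b) (hsub : F₀ ⊆ F₂) {x y : V}
    (h : G.Reach (insert g F₀) x y) : G.Reach F₂ x y := by
  induction h with
  | refl => exact Relation.ReflTransGen.refl
  | @tail c d hxc hstep ih =>
    obtain ⟨f, hf, hends⟩ := hstep
    rcases Set.mem_insert_iff.mp hf with rfl | hfF
    · rcases Sym2.eq_iff.mp (hends.symm.trans hg) with ⟨rfl, rfl⟩ | ⟨rfl, rfl⟩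
      · exact ih.trans' hab
      · exact ih.trans' (reach_symm hab)
    · exact ih.trans' (reach_step (hsub hfF) hends)

lemma acyclic_insert {F : Set E} (hF : G.Acyclic F) {f : E} {a b : V}
    (hf : G.ends f = s(a, b)) (hnr : ¬ G.Reach F a b) (hfF : f ∉ F) :
    G.Acyclic (insert f F) := by
  intro g hg x y hgxy hr
  rcases Set.mem_insert_iff.mp hg with rfl | hgF
  · rw [Set.insert_diff_self_of_notMem hfF] at hr
    rcases Sym2.eq_iff.mp (hgxy.symm.trans hf) with ⟨rfl, rfl⟩ | ⟨rfl, rfl⟩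
    · exact hnr hr
    · exact hnr (reach_symm hr)
  · have hne : f ≠ g := fun h => hfF (h ▸ hgF)
    rw [Set.insert_diff_of_notMem _ (by simp [hne])] at hr
    rcases reach_insert_cases hf hr with h3 | ⟨hx, hy⟩
    · exact hF g hgF x y hgxy h3
    · have hstepg : G.Reach F x y := reach_step hgF hgxy
      rcases hx with hx | hx <;> rcases hy with hy | hy
      · exact hF g hgF x y hgxy (hx.trans' hy)
      · exact hnr (((reach_mono Set.diff_subset (reach_symm hx)).trans' hstepg).trans'
          (reach_mono Set.diff_subset (reach_symm hy)))
      · exact hnr (reach_symm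
          (((reach_mono Set.diff_subset (reach_symm hx)).trans' hstepg).trans'
            (reach_mono Set.diff_subset (reach_symm hy))))
      · exact hF g hgF x y hgxy (hx.trans' hy)

lemma reach_onpath [Finite E] {F : Set E} (hF : G.Acyclic F) {u v : V}
    (h : G.Reach F u v) : G.Reach {g | g ∈ F ∧ ¬ G.Reach (F \ {g}) u v} u v := by
  have key : ∀ (n : ℕ) (F : Set E), F.ncard ≤ n → G.Acyclic F → G.Reach F u v →
      G.Reach {g | g ∈ F ∧ ¬ G.Reach (F \ {g}) u v} u v := by
    intro n
    induction n with
    | zero =>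
      intro F hn _ hr
      have hFe : F = ∅ := by
        rw [← Set.ncard_eq_zero (Set.toFinite F)]; omega
      subst hFe
      exact (reach_empty hr) ▸ Relation.ReflTransGen.refl
    | succ n ih =>
      intro F hn hacy hr
      by_cases hall : ∀ g ∈ F, ¬ G.Reach (F \ {g}) u v
      · exact reach_mono (fun g hg => Set.mem_setOf.mpr ⟨hg, hall g hg⟩) hr
      · push_neg at hall
        obtain ⟨g, hgF, hre⟩ := hall
        have hsub : (F \ {g}).ncard ≤ n := by
          have := Set.ncard_diff_singleton_add_one hgF (Set.toFinite F); omega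
        have hmain := ih (F \ {g}) hsub (hacy.mono Set.diff_subset) hre
        refine reach_mono ?_ hmain
        rintro h' ⟨⟨hh'F, hh'g⟩, hnr2⟩
        have hh'ne : h' ≠ g := by simpa using hh'g
        refine ⟨hh'F, fun hcon => hnr2 ?_⟩
        by_contra hK
        obtain ⟨c, d, -, hcd⟩ := G.ends_pair h'
        have hsub2 : F \ {g} ⊆ insert h' ((F \ {g}) \ {h'}) := by
          intro t ht
          by_cases h : t = h'
          · exact h ▸ Set.mem_insert _ _
          · exact Set.mem_insert_of_mem _ ⟨ht, by simpa using h⟩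
        have hreach2 : G.Reach (insert h' ((F \ {g}) \ {h'})) u v :=
          reach_mono hsub2 hre
        have hsub3 : (F \ {g}) \ {h'} ⊆ F \ {h'} :=
          fun t ht => ⟨ht.1.1, ht.2⟩
        rcases reach_insert_cases hcd hreach2 with h5 | ⟨hx, hy⟩
        · exact hK h5
        · rcases hx with hx | hx <;> rcases hy with hy | hy
          · exact hK (hx.trans' hy)
          · exact hacy h' hh'F c d hcd
              (((reach_mono hsub3 (reach_symm hx)).trans' hcon).trans'
                (reach_mono hsub3 (reach_symm hy)))
          · exact hacy h' hh'F c d hcd (reach_symm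
              (((reach_mono hsub3 (reach_symm hx)).trans' hcon).trans'
                (reach_mono hsub3 (reach_symm hy))))
          · exact hK (hx.trans' hy)
  exact key F.ncard F le_rfl hF h

lemma exists_cross {S : Set E} {u v : V} (P : V → Prop) (h : G.Reach S u v)
    (hu : P u) (hv : ¬ P v) :
    ∃ f ∈ S, ∃ a b, G.ends f = s(a, b) ∧ P a ∧ ¬ P b := by
  induction h with
  | refl => exact absurd hu hv
  | @tail c d hxc hstep ih =>
    by_cases hc : P c
    · obtain ⟨g, hg, hends⟩ := hstep
      exact ⟨g, hg, c, d, hends, hc, hv⟩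
    · exact ih hc

lemma weight_insert [Finite E] (w : E → ℝ) {F : Set E} {f : E} (hf : f ∉ F) :
    weight w (insert f F) = w f + weight w F :=
  finsum_mem_insert w hf (Set.toFinite F)

lemma weight_diff [Finite E] (w : E → ℝ) {F : Set E} {f : E} (hf : f ∈ F) :
    weight w F = w f + weight w (F \ {f}) := by
  have hF : F = insert f (F \ {f}) := by
    rw [Set.insert_diff_singleton, Set.insert_eq_of_mem hf]
  conv_lhs => rw [hF]
  exact weight_insert w (by simp)

lemma weight_subtype {p : E → Prop} (w : E → ℝ) (T' : Set {f : E // p f}) :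
    weight (fun f => w f.1) T' = weight w (Subtype.val '' T') :=
  (finsum_mem_image (f := w) (g := Subtype.val) (s := T') Subtype.val_injective.injOn).symm

lemma isSpanningTree_iff_connected [Finite V] [Finite E] {T : Set E} :
    G.IsSpanningTree T ↔ T.ncard = Nat.card V - 1 ∧ G.ConnectedOn T := by
  constructor
  · rintro ⟨hcard, hacy⟩
    refine ⟨hcard, connectedOn_iff_comp_le_one.mpr ?_⟩
    have := comp_add_ncard_eq hacy
    omega
  · rintro ⟨hcard, hconn⟩
    refine ⟨hcard, ?_⟩
    intro g hg x y hgxy hr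
    have hconn' : G.ConnectedOn (T \ {g}) := by
      intro u' v'
      have h2 : T ⊆ insert g (T \ {g}) := by
        intro t ht
        by_cases h : t = g
        · exact h ▸ Set.mem_insert _ _
        · exact Set.mem_insert_of_mem _ ⟨ht, by simpa using h⟩
      exact reach_subst hgxy hr Set.Subset.rfl (reach_mono h2 (hconn u' v'))
    have hge1 : 0 < T.ncard := (Set.ncard_pos (Set.toFinite T)).mpr ⟨g, hg⟩
    have h3 := card_le_comp_add_ncard (G := G) (T \ {g})
    have h4 : (T \ {g}).ncard + 1 = T.ncard := Set.ncard_diff_singleton_add_one hg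
    have h5 : G.comp (T \ {g}) ≤ 1 := connectedOn_iff_comp_le_one.mp hconn'
    omega

lemma contract_mk_eq_iff {e : E} {x y : V} :
    Quotient.mk (G.contractSetoid e) x = Quotient.mk (G.contractSetoid e) y ↔
      (x = y ∨ G.ends e = s(x, y)) :=
  ⟨fun h => Quotient.exact h, fun h => Quotient.sound h⟩

lemma card_contract [Finite V] {e : E} {u₀ v₀ : V} (he : G.ends e = s(u₀, v₀))
    (hne : u₀ ≠ v₀) :
    Nat.card (Quotient (G.contractSetoid e)) + 1 = Nat.card V := by
  have hsurj : Function.Surjective (Quotient.mk (G.contractSetoid e)) :=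
    fun q => q.exists_rep
  have hkey : ∀ a b : V,
      Quotient.mk (G.contractSetoid e) a = Quotient.mk (G.contractSetoid e) b →
      a = b ∨ (a = u₀ ∧ b = v₀) ∨ (a = v₀ ∧ b = u₀) := by
    intro a b hab
    rcases contract_mk_eq_iff.mp hab with h | h
    · exact Or.inl h
    · exact Or.inr (Sym2.eq_iff.mp (h.symm.trans he))
  obtain ⟨-, heq⟩ := card_step hsurj u₀ v₀ hkey
  exact (heq hne (Quotient.sound (Or.inr he))).symm

lemma reach_contract_of_reach {e : E} {F : Set E} {x y : V} (h : G.Reach F x y) :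
    (G.contract e).Reach {f | f.1 ∈ F} (Quotient.mk (G.contractSetoid e) x)
      (Quotient.mk (G.contractSetoid e) y) := by
  induction h with
  | refl => exact Relation.ReflTransGen.refl
  | @tail c d hxc hstep ih =>
    obtain ⟨g, hg, hends⟩ := hstep
    by_cases hge : g = e ∨ G.ends g = G.ends e
    · have hsame : G.ends e = s(c, d) := by
        rcases hge with rfl | h
        · exact hends
        · exact h.symm.trans hends
      have hqq : Quotient.mk (G.contractSetoid e) c = Quotient.mk (G.contractSetoid e) d :=
        Quotient.sound (Or.inr hsame)
      exact hqq ▸ ih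
    · push_neg at hge
      refine ih.tail ⟨⟨g, hge.1, hge.2⟩, hg, ?_⟩
      show (G.ends g).map (Quotient.mk (G.contractSetoid e)) = _
      rw [hends, Sym2.map_pair_eq]

lemma reach_of_reach_contract {e : E} {F' : Set {f : E // f ≠ e ∧ G.ends f ≠ G.ends e}}
    {c d : Quotient (G.contractSetoid e)} (h : (G.contract e).Reach F' c d) :
    ∀ x y : V, Quotient.mk (G.contractSetoid e) x = c →
      Quotient.mk (G.contractSetoid e) y = d →
      G.Reach (insert e (Subtype.val '' F')) x y := by
  induction h with
  | refl =>
    intro x y hx hy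
    rcases contract_mk_eq_iff.mp (hx.trans hy.symm) with rfl | hxy
    · exact Relation.ReflTransGen.refl
    · exact reach_step (Set.mem_insert e _) hxy
  | @tail b d hcb hstep ih =>
    intro x y hx hy
    obtain ⟨f', hf', hends⟩ := hstep
    obtain ⟨a', b', -, hab'⟩ := G.ends_pair f'.1
    have hmap : Sym2.map (Quotient.mk (G.contractSetoid e)) s(a', b') = s(b, d) := by
      rw [← hab']; exact hends
    rw [Sym2.map_pair_eq] at hmap
    have hstepmem : f'.1 ∈ insert e (Subtype.val '' F') :=
      Set.mem_insert_of_mem _ ⟨f', hf', rfl⟩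
    rcases Sym2.eq_iff.mp hmap with ⟨h1, h2⟩ | ⟨h1, h2⟩
    · have r1 := ih x a' hx h1
      have r2 : G.Reach (insert e (Subtype.val '' F')) a' b' := reach_step hstepmem hab'
      have r3 : G.Reach (insert e (Subtype.val '' F')) b' y := by
        rcases contract_mk_eq_iff.mp (h2.trans hy.symm) with rfl | hxy
        · exact Relation.ReflTransGen.refl
        · exact reach_step (Set.mem_insert e _) hxy
      exact (r1.trans' r2).trans' r3
    · have r1 := ih x b' hx h2
      have r2 : G.Reach (insert e (Subtype.val '' F')) b' a' :=
        reach_step hstepmem (by rw [hab', Sym2.eq_swap])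
      have r3 : G.Reach (insert e (Subtype.val '' F')) a' y := by
        rcases contract_mk_eq_iff.mp (h1.trans hy.symm) with rfl | hxy
        · exact Relation.ReflTransGen.refl
        · exact reach_step (Set.mem_insert e _) hxy
      exact (r1.trans' r2).trans' r3

lemma no_parallel [Finite V] [Finite E] {e : E} {T : Set E}
    (hT : G.IsSpanningTree T) (heT : e ∈ T) :
    Subtype.val '' {f : {f : E // f ≠ e ∧ G.ends f ≠ G.ends e} | f.1 ∈ T} = T \ {e} := by
  ext g
  constructor
  · rintro ⟨f', hf', rfl⟩
    exact ⟨hf', f'.2.1⟩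
  · rintro ⟨hgT, hge⟩
    have hge' : g ≠ e := by simpa using hge
    have hends : G.ends g ≠ G.ends e := by
      intro hsame
      obtain ⟨a, b, -, hab⟩ := G.ends_pair e
      refine hT.2 e heT a b hab
        (reach_step (F := T \ {e}) (f := g) ⟨hgT, by simpa using hge'⟩ ?_)
      rw [← hsame] at hab; exact hab
    exact ⟨⟨g, hge', hends⟩, hgT, rfl⟩

lemma contract_spanningTree_of [Finite V] [Finite E] {e : E} {T : Set E}
    (hT : G.IsSpanningTree T) (heT : e ∈ T) :
    (G.contract e).IsSpanningTree
      {f : {f : E // f ≠ e ∧ G.ends f ≠ G.ends e} | f.1 ∈ T} := by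
  obtain ⟨u₀, v₀, hne, he⟩ := G.ends_pair e
  have hcardV := card_contract (G := G) he hne
  have himg := no_parallel hT heT
  have hT1 := hT.1
  have hTpos : 0 < T.ncard := (Set.ncard_pos (Set.toFinite T)).mpr ⟨e, heT⟩
  rw [isSpanningTree_iff_connected]
  constructor
  · have h5 : ({f : {f : E // f ≠ e ∧ G.ends f ≠ G.ends e} | f.1 ∈ T}).ncard
        = (T \ {e}).ncard := by
      rw [← himg]
      exact (Set.ncard_image_of_injective _ Subtype.val_injective).symm
    have h6 : (T \ {e}).ncard + 1 = T.ncard := Set.ncard_diff_singleton_add_one heT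
    omega
  · intro c d
    obtain ⟨x, rfl⟩ := c.exists_rep
    obtain ⟨y, rfl⟩ := d.exists_rep
    exact reach_contract_of_reach ((isSpanningTree_iff_connected.mp hT).2 x y)

lemma spanningTree_of_contract [Finite V] [Finite E] {e : E}
    {T' : Set {f : E // f ≠ e ∧ G.ends f ≠ G.ends e}}
    (hT' : (G.contract e).IsSpanningTree T') :
    G.IsSpanningTree (insert e (Subtype.val '' T')) := by
  obtain ⟨u₀, v₀, hne, he⟩ := G.ends_pair e
  have hcardV := card_contract (G := G) he hne
  have hQpos : 0 < Nat.card (Quotient (G.contractSetoid e)) := by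
    have : Nonempty (Quotient (G.contractSetoid e)) := ⟨Quotient.mk _ u₀⟩
    exact Nat.card_pos
  rw [isSpanningTree_iff_connected]
  constructor
  · have hnotmem : e ∉ Subtype.val '' T' := by
      rintro ⟨f', -, hf'⟩
      exact f'.2.1 hf'
    rw [Set.ncard_insert_of_notMem hnotmem (Set.toFinite _),
      Set.ncard_image_of_injective _ Subtype.val_injective]
    have hT'1 := hT'.1
    omega
  · intro x y
    exact reach_of_reach_contract
      ((isSpanningTree_iff_connected.mp hT').2 (Quotient.mk (G.contractSetoid e) x)
        (Quotient.mk (G.contractSetoid e) y)) x y rfl rfl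

lemma weight_ge_of_contains [Finite V] [Finite E] {w : E → ℝ} {TOPT T : Set E}
    (hOPT : G.IsMST w TOPT) {e estar : E} {u v : V} (he : G.ends e = s(u, v))
    (heOPT : e ∉ TOPT)
    (hmax : ∀ g, G.OnPath TOPT u v g → w g ≤ w estar)
    (hT : G.IsSpanningTree T) (heT : e ∈ T) :
    weight w TOPT + w e - w estar ≤ weight w T := by
  have hne : u ≠ v := fun h =>
    G.loopless e (by rw [he, h]; exact Sym2.mk_isDiag_iff.mpr rfl)
  have hnuv : ¬ G.Reach (T \ {e}) u v := hT.2 e heT u v he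
  have hOPTtree := hOPT.1
  have hconnOPT := (isSpanningTree_iff_connected.mp hOPTtree).2
  have hpath := reach_onpath hOPTtree.2 (hconnOPT u v)
  obtain ⟨f, hfS, a, b, hfab, hPa, hPb⟩ :=
    exists_cross (fun x => G.Reach (T \ {e}) u x) hpath Relation.ReflTransGen.refl hnuv
  obtain ⟨hfOPT, hfsep⟩ := hfS
  have hwf : w f ≤ w estar := hmax f ⟨hfOPT, hfsep⟩
  have hfne : f ≠ e := fun h => heOPT (h ▸ hfOPT)
  have hfnT : f ∉ T \ {e} := fun hmem => hPb (hPa.trans' (reach_step hmem hfab))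
  have hnab : ¬ G.Reach (T \ {e}) a b := fun hr => hPb (hPa.trans' hr)
  have hacyT : G.Acyclic (T \ {e}) := hT.2.mono Set.diff_subset
  have hacy3 : G.Acyclic (insert f (T \ {e})) := acyclic_insert hacyT hfab hnab hfnT
  have hcard3 : (insert f (T \ {e})).ncard = Nat.card V - 1 := by
    have h1 : (T \ {e}).ncard + 1 = T.ncard := Set.ncard_diff_singleton_add_one heT
    have h2 := hT.1
    have hV2 : 2 ≤ Nat.card V := by
      have : Nontrivial V := ⟨⟨u, v, hne⟩⟩
      exact Finite.one_lt_card
    rw [Set.ncard_insert_of_notMem hfnT (Set.toFinite _)]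
    omega
  have hle := hOPT.2 _ ⟨hcard3, hacy3⟩
  have hw3 : weight w (insert f (T \ {e})) = w f + weight w (T \ {e}) :=
    weight_insert w hfnT
  have hwT : weight w T = w e + weight w (T \ {e}) := weight_diff w heT
  linarith

end Aux

end Multigraph

open Multigraph in
/-- With `e* := e` if `e` lies in some minimum spanning tree, and otherwise
`e*` a maximum-weight edge other than `e` on the unique cycle of `T^OPT ∪ {e}` (equivalently,
on the `u`-`v` path in `T^OPT`, where `e = {u,v}`): the minimum weight of a spanning tree of
the contraction `G/e` equals the minimum weight of a spanning tree of `G` minus `w e*`. -/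
theorem contract_minSpanningTreeWeight {V E : Type*} [Finite V] [Finite E]
    (G : Multigraph V E) (hG : G.Connected) (w : E → ℝ)
    (TOPT : Set E) (hOPT : G.IsMST w TOPT) (e : E) (estar : E)
    (hstar : ((∃ T, G.IsMST w T ∧ e ∈ T) ∧ estar = e) ∨
      ((¬ ∃ T, G.IsMST w T ∧ e ∈ T) ∧ ∃ u v : V, G.ends e = s(u, v) ∧
        G.OnPath TOPT u v estar ∧ ∀ g, G.OnPath TOPT u v g → w g ≤ w estar)) :
    sInf {x : ℝ | ∃ T', (G.contract e).IsSpanningTree T' ∧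
        x = Multigraph.weight (fun f => w f.1) T'}
      = Multigraph.weight w TOPT - w estar := by
  have hbound : ∀ T : Set E, G.IsSpanningTree T → e ∈ T →
      Multigraph.weight w TOPT + w e - w estar ≤ Multigraph.weight w T := by
    intro T hT heT
    rcases hstar with ⟨⟨T₁, hT₁, heT₁⟩, rfl⟩ | ⟨hno, u, v, he, honp, hmax⟩
    · have := hOPT.2 T hT
      linarith
    · have heOPT : e ∉ TOPT := fun hmem => hno ⟨TOPT, hOPT, hmem⟩
      exact weight_ge_of_contains hOPT he heOPT hmax hT heT
  have hmem : (Multigraph.weight w TOPT - w estar) ∈ {x : ℝ |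
      ∃ T', (G.contract e).IsSpanningTree T' ∧
        x = Multigraph.weight (fun f => w f.1) T'} := by
    rcases hstar with ⟨⟨T₁, hT₁, heT₁⟩, hestar⟩ | ⟨hno, u, v, he, honp, hmax⟩
    · refine ⟨{f | f.1 ∈ T₁}, contract_spanningTree_of hT₁.1 heT₁, ?_⟩
      have h1 : Multigraph.weight (fun f => w f.1)
            {f : {f : E // f ≠ e ∧ G.ends f ≠ G.ends e} | f.1 ∈ T₁}
          = Multigraph.weight w (T₁ \ {e}) := by
        rw [weight_subtype, no_parallel hT₁.1 heT₁]
      have h2 : Multigraph.weight w T₁ = w e + Multigraph.weight w (T₁ \ {e}) :=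
        weight_diff w heT₁
      have h3 : Multigraph.weight w T₁ = Multigraph.weight w TOPT :=
        le_antisymm (hT₁.2 TOPT hOPT.1) (hOPT.2 T₁ hT₁.1)
      rw [hestar, h1]
      linarith
    · have heOPT : e ∉ TOPT := fun hmem => hno ⟨TOPT, hOPT, hmem⟩
      obtain ⟨hesOPT, hsep⟩ := honp
      have hneuv : u ≠ v := fun h =>
        G.loopless e (by rw [he, h]; exact Sym2.mk_isDiag_iff.mpr rfl)
      have henes : e ∉ TOPT \ {estar} := fun h => heOPT h.1
      have hT₂tree : G.IsSpanningTree (insert e (TOPT \ {estar})) := by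
        rw [isSpanningTree_iff_connected]
        constructor
        · have h1 : (TOPT \ {estar}).ncard + 1 = TOPT.ncard :=
            Set.ncard_diff_singleton_add_one hesOPT
          have h2 := hOPT.1.1
          have hpos : 0 < TOPT.ncard := (Set.ncard_pos (Set.toFinite TOPT)).mpr ⟨estar, hesOPT⟩
          rw [Set.ncard_insert_of_notMem henes (Set.toFinite _)]
          omega
        · intro x y
          have hconnOPT := (isSpanningTree_iff_connected.mp hOPT.1).2
          obtain ⟨a, b, -, hab⟩ := G.ends_pair estar
          have hsubOPT : TOPT ⊆ insert estar (TOPT \ {estar}) := by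
            intro t ht
            by_cases h : t = estar
            · exact h ▸ Set.mem_insert _ _
            · exact Set.mem_insert_of_mem _ ⟨ht, by simpa using h⟩
          have hr_ab : G.Reach (insert e (TOPT \ {estar})) a b := by
            rcases reach_insert_cases hab (reach_mono hsubOPT (hconnOPT u v)) with
              h5 | ⟨hx, hy⟩
            · exact absurd h5 hsep
            · have hstepe : G.Reach (insert e (TOPT \ {estar})) u v :=
                reach_step (Set.mem_insert e _) he
              have hmono : ∀ {x' y' : V}, G.Reach (TOPT \ {estar}) x' y' →
                  G.Reach (insert e (TOPT \ {estar})) x' y' :=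
                fun h => reach_mono (Set.subset_insert e _) h
              rcases hx with hx | hx <;> rcases hy with hy | hy
              · exact absurd (hx.trans' hy) hsep
              · exact ((hmono (reach_symm hx)).trans' hstepe).trans' (hmono (reach_symm hy))
              · exact reach_symm
                  (((hmono (reach_symm hx)).trans' hstepe).trans' (hmono (reach_symm hy)))
              · exact absurd (hx.trans' hy) hsep
          exact reach_subst hab hr_ab (Set.subset_insert e _)
            (reach_mono hsubOPT (hconnOPT x y))
      refine ⟨{f | f.1 ∈ insert e (TOPT \ {estar})},
        contract_spanningTree_of hT₂tree (Set.mem_insert e _), ?_⟩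
      have h1 : Multigraph.weight (fun f => w f.1)
            {f : {f : E // f ≠ e ∧ G.ends f ≠ G.ends e} | f.1 ∈ insert e (TOPT \ {estar})}
          = Multigraph.weight w ((insert e (TOPT \ {estar})) \ {e}) := by
        rw [weight_subtype, no_parallel hT₂tree (Set.mem_insert e _)]
      have h2 : (insert e (TOPT \ {estar})) \ {e} = TOPT \ {estar} :=
        Set.insert_diff_self_of_notMem henes
      have h3 : Multigraph.weight w TOPT = w estar + Multigraph.weight w (TOPT \ {estar}) :=
        weight_diff w hesOPT
      rw [h1, h2]
      linarith
  have hlb : ∀ x ∈ {x : ℝ | ∃ T', (G.contract e).IsSpanningTree T' ∧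
      x = Multigraph.weight (fun f => w f.1) T'},
      Multigraph.weight w TOPT - w estar ≤ x := by
    rintro x ⟨T', hT', rfl⟩
    have htree := spanningTree_of_contract hT'
    have hb := hbound _ htree (Set.mem_insert e _)
    have hnotmem : e ∉ Subtype.val '' T' := by
      rintro ⟨f', -, hf'⟩
      exact f'.2.1 hf'
    have hw : Multigraph.weight w (insert e (Subtype.val '' T'))
        = w e + Multigraph.weight w (Subtype.val '' T') := weight_insert w hnotmem
    rw [weight_subtype]
    linarith
  exact le_antisymm (csInf_le ⟨_, hlb⟩ hmem) (le_csInf ⟨_, hmem⟩ hlb)
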